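/- arXiv:0805.3018 — 4 statements merged into one kernel-verified Lean document; each statement's English description precedes it below -/
import Mathlib

section
/- Let θ ∈ K satisfy θ·conj(θ) = 1 and let M₀ = [[−θ,1],[0,conj(θ)]]. Then for every Hermitian X = [[x⁺,z],[conj(z),x⁻]], the matrix M₀·conj(X)·M₀† agrees with the reflection of X in the root α₀ = [[−1,−θ],[−conj(θ),0]], i.e., M₀·conj(X)·M₀† = X − (X,α₀)·α₀, where (·,·) is the Lorentzian bilinear form associated to −2 det. -/
open Matrix

/-- Let `K` be an associative normed division algebra (`ℝ`, `ℂ` or `ℍ`), viewed as a star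
`ℝ`-algebra with norm `n : K → ℝ` satisfying `z·conj z = n(z)` (as a real scalar).
Let `θ` be a unit (`θ·conj θ = 1`) and `M₀ = [[−θ,1],[0,conj θ]]`.  Then for the
Hermitian matrix `X = [[x⁺,z],[conj z,x⁻]]`, the map `X ↦ M₀·conj(X)·M₀†` agrees with
the reflection of `X` in the root `α₀ = [[−1,−θ],[−conj θ,0]]`, i.e.
`M₀·conj(X)·M₀† = X − (X,α₀)·α₀`, where `(X,α₀)` is the value on `(X,α₀)` of the
Lorentzian bilinear form obtained by polarizing `‖X‖² = −2 det X`
(with `det [[p,z],[conj z,q]] = p·q − n(z)`). -/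
theorem affine_simple_reflection {K : Type*} [Ring K] [StarRing K]
    [Algebra ℝ K] [StarModule ℝ K]
    (n : K → ℝ) (hn : ∀ z : K, z * star z = algebraMap ℝ K (n z))
    (θ : K) (hθ : θ * star θ = 1) (hθ' : star θ * θ = 1)
    (xp xm : ℝ) (z : K) :
    (!![-θ, 1; 0, star θ] : Matrix (Fin 2) (Fin 2) K) *
        (!![algebraMap ℝ K xp, z; star z, algebraMap ℝ K xm]).map star *
        (!![-θ, 1; 0, star θ] : Matrix (Fin 2) (Fin 2) K)ᴴ =
      !![algebraMap ℝ K xp, z; star z, algebraMap ℝ K xm] -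
        (-(((xp - 1) * xm - n (z - θ)) - (xp * xm - n z) - ((-1) * 0 - n (-θ)))) •
          (!![-1, -θ; -star θ, 0] : Matrix (Fin 2) (Fin 2) K) := by
  have hc : algebraMap ℝ K (-(((xp - 1) * xm - n (z - θ)) - (xp * xm - n z) - ((-1) * 0 - n (-θ))))
      = algebraMap ℝ K xm - z * star θ - θ * star z := by
    rw [show -(((xp - 1) * xm - n (z - θ)) - (xp * xm - n z) - ((-1) * 0 - n (-θ)))
        = xm + n (z - θ) - n z - n (-θ) by ring]
    simp only [map_sub, map_add, ← hn, star_sub, star_neg, neg_mul, mul_neg, neg_neg, hθ,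
      sub_mul, mul_sub]
    noncomm_ring
  have hstar : ∀ r : ℝ, star (algebraMap ℝ K r) = algebraMap ℝ K r := fun r => by
    rw [← algebraMap_star_comm, star_trivial]
  have ht : z * star θ + θ * star z = algebraMap ℝ K (n (z + θ) - n z - n θ) := by
    have h := hn (z + θ)
    rw [star_add, add_mul, mul_add, mul_add, hn z, hn θ] at h
    rw [map_sub, map_sub, ← h]
    abel
  have h3 : star z = z * star θ * star θ + θ * star z * star θ - star θ * z * star θ := by
    have h := congrArg (fun x => star θ * x) ht.symm
    simp only [mul_add] at h
    rw [← Algebra.commutes (R := ℝ), ← ht, add_mul] at h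
    -- h : star θ * (z * star θ) + star θ * (θ * star z) = z * star θ * star θ + θ * star z * star θ
    rw [← mul_assoc, ← mul_assoc, hθ', one_mul] at h
    rw [h]
    noncomm_ring
  ext i j
  fin_cases i <;> fin_cases j <;>
    simp only [Matrix.sub_apply, Matrix.smul_apply, mul_apply, Fin.sum_univ_two, conjTranspose_apply,
      map_apply, of_apply, cons_val', cons_val_zero, cons_val_one, head_cons, head_fin_const,
      empty_val', cons_val_fin_one, Fin.isValue, Fin.zero_eta, Fin.mk_one] <;>
    rw [Algebra.smul_def, hc] <;>
    simp only [hstar, star_star, star_neg, star_zero, star_one, mul_zero, zero_mul, mul_one,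
      one_mul, mul_neg, neg_mul, neg_neg, add_zero, zero_add, sub_mul, mul_sub, neg_sub]
  · simp only [← Algebra.commutes (R := ℝ), neg_mul, mul_neg, add_mul, sub_mul, mul_add,
      mul_sub, one_mul, mul_one, neg_neg, mul_assoc, hθ, hθ']
    noncomm_ring
  · simp only [← Algebra.commutes (R := ℝ), neg_mul, mul_neg, add_mul, sub_mul, mul_add,
      mul_sub, one_mul, mul_one, neg_neg, mul_assoc, hθ, hθ']
    noncomm_ring
  · nth_rewrite 1 [h3]
    simp only [← Algebra.commutes (R := ℝ), neg_mul, mul_neg, add_mul, sub_mul, mul_add,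
      mul_sub, one_mul, mul_one, neg_neg, mul_assoc, hθ, hθ']
    noncomm_ring
  · simp only [← Algebra.commutes (R := ℝ), neg_mul, mul_neg, add_mul, sub_mul, mul_add,
      mul_sub, one_mul, mul_one, neg_neg, mul_assoc, hθ, hθ']
    noncomm_ring
end

section
/- Let 𝒪 be a discrete Euclidean subring of ℂ of the form 𝒪 = {m + nθ² : m,n ∈ ℤ} where θ ∈ 𝒪 is a unit, and assume all units of 𝒪 have norm 1. Then SL₂(𝒪) is generated by the matrices [[1,1],[0,1]], [[ε,0],[0,conj(ε)]] for ε ranging over all units of 𝒪, and [[0,1],[−1,0]]. -/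
/-!
Run the Euclidean algorithm on the first column. Left multiplication by
`[[0, 1], [-1, 0]] * [[1, -q], [0, 1]]` replaces the lower-left entry `c` by minus the remainder
of the upper-left entry modulo `c`; since `𝒪` is discrete, the norm of `c` cannot decrease forever,
so we reach an upper triangular matrix, i.e. `diag(ε, ε⁻¹) * [[1, x], [0, 1]]`, where
`ε⁻¹ = conj ε` because units have norm one. Finally every `[[1, x], [0, 1]]` with `x ∈ 𝒪` is
generated: conjugating `[[1, 1], [0, 1]]` by `diag(θ, θ⁻¹)` gives `[[1, θ²], [0, 1]]`, and
`1, θ²` span `𝒪` over `ℤ`.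
-/

open Matrix Matrix.SpecialLinearGroup
open scoped MatrixGroups

lemma AddSubgroup.discreteTopology_of_le_norm {E : Type*} [SeminormedAddCommGroup E]
    (O : AddSubgroup E) {ε : ℝ} (hε : 0 < ε) (hsep : ∀ z ∈ O, z ≠ 0 → ε ≤ ‖z‖) :
    DiscreteTopology O := by
  refine discreteTopology_of_isOpen_singleton_zero ?_
  have : ({0} : Set O) = Subtype.val ⁻¹' Metric.ball 0 ε := by
    ext ⟨z, hz⟩
    simp only [Set.mem_singleton_iff, Set.mem_preimage, mem_ball_zero_iff]
    refine ⟨fun h => by simp_all, fun h => ?_⟩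
    by_contra hne
    exact (hsep z hz fun h0 => hne (Subtype.ext h0)).not_gt h
  rw [this]
  exact Metric.isOpen_ball.preimage continuous_subtype_val

lemma AddSubgroup.finite_setOf_norm_lt {E : Type*} [NormedAddCommGroup E] [ProperSpace E]
    (O : AddSubgroup E) [DiscreteTopology O] (C : ℝ) : {z | z ∈ O ∧ ‖z‖ < C}.Finite := by
  refine (Metric.finite_isBounded_inter_isClosed DiscreteTopology.isDiscrete
    (Metric.isBounded_ball (x := 0) (r := C)) O.isClosed_of_discrete).subset ?_
  rintro z ⟨hz, hzC⟩
  exact ⟨mem_ball_zero_iff.mpr hzC, hz⟩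

lemma Set.wellFoundedOn_norm_lt_of_finite {E : Type*} [Norm E] {s : Set E}
    (hs : ∀ C : ℝ, {z | z ∈ s ∧ ‖z‖ < C}.Finite) : s.WellFoundedOn (fun x y => ‖x‖ < ‖y‖) := by
  let below (y : E) := {z | z ∈ s ∧ ‖z‖ < ‖y‖}.ncard
  refine WellFoundedOn.mono' (fun x hx y _ hxy => ?_)
    (InvImage.wf below wellFounded_lt).wellFoundedOn
  refine Set.ncard_lt_ncard ⟨fun z hz => ⟨hz.1, hz.2.trans hxy⟩, fun hsub => ?_⟩ (hs _)
  exact (hsub ⟨hx, hxy⟩).2.false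

namespace Matrix.SpecialLinearGroup

variable {R : Type*} [CommRing R]

lemma mul_apply_mem {n : Type*} [DecidableEq n] [Fintype n] {S : Subring R}
    {A B : SpecialLinearGroup n R} (hA : ∀ i j, A i j ∈ S) (hB : ∀ i j, B i j ∈ S) (i j : n) :
    (A * B) i j ∈ S := by
  rw [coe_mul, mul_apply]
  exact sum_mem fun k _ => mul_mem (hA i k) (hB k j)

lemma transvection_zsmul {ι : Type*} [DecidableEq ι] [Fintype ι] {i j : ι} (hij : i ≠ j)
    (n : ℤ) (b : R) : transvection hij (n • b) = transvection hij b ^ n := by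
  induction n using Int.induction_on with
  | zero => simp
  | succ n ih =>
    rw [add_zsmul, one_zsmul, transvection_add hij, ih]
    exact (_root_.zpow_add_one _ _).symm
  | pred n ih =>
    rw [sub_zsmul, one_zsmul, sub_eq_add_neg, transvection_add hij, ih, ← transvection_inv hij b,
      ← sub_eq_add_neg]
    exact (_root_.zpow_sub_one _ _).symm

lemma coe_transvection_zero_one (b : R) :
    ((transvection zero_ne_one b : SL(2, R)) : Matrix (Fin 2) (Fin 2) R) = !![1, b; 0, 1] := by
  ext i j
  fin_cases i <;> fin_cases j <;> simp [transvection_coe]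

lemma transvection_zero_one_apply_mem {S : Subring R} {b : R} (hb : b ∈ S) (i j : Fin 2) :
    (transvection zero_ne_one b : SL(2, R)) i j ∈ S := by
  rw [coe_transvection_zero_one]
  fin_cases i <;> fin_cases j <;> simp [hb, S.one_mem, S.zero_mem]

variable (R) in
def weylElement : SL(2, R) :=
  ⟨!![0, 1; -1, 0], by simp [det_fin_two_of]⟩

lemma weylElement_apply_mem (S : Subring R) (i j : Fin 2) : weylElement R i j ∈ S := by
  fin_cases i <;> fin_cases j <;> simp [weylElement, S.one_mem, S.zero_mem, S.neg_mem]

lemma weylElement_mul_transvection_mul_apply_one_zero (q : R) (B : SL(2, R)) :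
    (weylElement R * transvection zero_ne_one (-q) * B : SL(2, R)) 1 0 = q * B 1 0 - B 0 0 := by
  rw [coe_mul, coe_mul]
  simp [weylElement, mul_apply, Fin.sum_univ_two, transvection_coe, vecMul, dotProduct,
    sub_eq_neg_add]

lemma apply_zero_zero_mul_apply_one_one {B : SL(2, R)} (h : B 1 0 = 0) : B 0 0 * B 1 1 = 1 := by
  have hdet := B.det_coe
  rwa [det_fin_two, h, mul_zero, sub_zero] at hdet

lemma coe_mul_transvection_of_apply_one_zero {B : SL(2, R)} (h : B 1 0 = 0) :
    ((B * transvection zero_ne_one (-(B 1 1 * B 0 1)) : SL(2, R)) : Matrix (Fin 2) (Fin 2) R) =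
      !![B 0 0, 0; 0, B 1 1] := by
  have hdet (x : R) : B 0 0 * (B 1 1 * x) = x := by
    rw [← mul_assoc, apply_zero_zero_mul_apply_one_one h, one_mul]
  rw [coe_mul, coe_transvection_zero_one, eta_fin_two (B : Matrix (Fin 2) (Fin 2) R), h]
  simp [hdet]

lemma diag2_mul_transvection_mul_inv {F : Type*} [Field F] (a : F) (ha : a ≠ 0) (b : F) :
    diag2 a ha * transvection zero_ne_one b * (diag2 a ha)⁻¹ =
      transvection zero_ne_one (a ^ 2 * b) := by
  have h := commutator_diag2_transvection a ha b _ rfl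
  rw [commutatorElement_def, mul_inv_eq_iff_eq_mul, ← transvection_add] at h
  rw [h]
  congr 1
  ring

end Matrix.SpecialLinearGroup

lemma Complex.conj_eq_of_mul_eq_one {a b : ℂ} (hab : a * b = 1) (ha : Complex.normSq a = 1) :
    (starRingEnd ℂ) a = b := by
  refine mul_left_cancel₀ (left_ne_zero_of_mul_eq_one hab) ?_
  rw [hab, Complex.mul_conj, ha, Complex.ofReal_one]

def sl2Generators (O : Subring ℂ) : Set SL(2, ℂ) :=
  {B : SpecialLinearGroup (Fin 2) ℂ |
      (B : Matrix (Fin 2) (Fin 2) ℂ) = !![1, 1; 0, 1] ∨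
      (B : Matrix (Fin 2) (Fin 2) ℂ) = !![0, 1; -1, 0] ∨
      ∃ ε : ℂ, ε ∈ O ∧ (∃ v ∈ O, ε * v = 1) ∧
        (B : Matrix (Fin 2) (Fin 2) ℂ) = !![ε, 0; 0, starRingEnd ℂ ε]}

namespace sl2Generators

variable {O : Subring ℂ} {H : Subgroup SL(2, ℂ)} (hH : sl2Generators O ⊆ H)
include hH

local notation "τ" => SpecialLinearGroup.transvection (zero_ne_one : (0 : Fin 2) ≠ 1)

lemma weylElement_mem : weylElement ℂ ∈ H :=
  hH (Or.inr (Or.inl rfl))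

lemma transvection_one_mem : τ (1 : ℂ) ∈ H :=
  hH (Or.inl (coe_transvection_zero_one 1))

lemma diag2_mem {u v : ℂ} (hu : u ∈ O) (hv : v ∈ O) (huv : u * v = 1)
    (hnorm : Complex.normSq u = 1) : diag2 u (left_ne_zero_of_mul_eq_one huv) ∈ H := by
  refine hH (Or.inr (Or.inr ⟨u, hu, ⟨v, hv, huv⟩, ?_⟩))
  rw [diag2_coe', Complex.conj_eq_of_mul_eq_one huv hnorm, eq_inv_of_mul_eq_one_right huv]

lemma transvection_mem {θ ν : ℂ} (hθ : θ ∈ O) (hν : ν ∈ O) (hθν : θ * ν = 1)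
    (hnorm : Complex.normSq θ = 1) (hform : ∀ z ∈ O, ∃ m n : ℤ, z = m + n * θ ^ 2)
    {x : ℂ} (hx : x ∈ O) : τ x ∈ H := by
  have hθsq : τ (θ ^ 2) ∈ H := by
    rw [← mul_one (θ ^ 2), ← diag2_mul_transvection_mul_inv θ (left_ne_zero_of_mul_eq_one hθν)]
    have hD := diag2_mem hH hθ hν hθν hnorm
    exact mul_mem (mul_mem hD (transvection_one_mem hH)) (inv_mem hD)
  obtain ⟨m, n, rfl⟩ := hform x hx
  rw [transvection_add, ← zsmul_one, ← zsmul_eq_mul, transvection_zsmul, transvection_zsmul]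
  exact mul_mem (zpow_mem (transvection_one_mem hH) m) (zpow_mem hθsq n)

variable (hunits : ∀ u ∈ O, (∃ v ∈ O, u * v = 1) → Complex.normSq u = 1)
  (hτ : ∀ x ∈ O, τ x ∈ H)
include hunits hτ

lemma mem_of_apply_one_zero_eq_zero {B : SL(2, ℂ)} (hB : ∀ i j, B i j ∈ O) (h : B 1 0 = 0) :
    B ∈ H := by
  have hdet := apply_zero_zero_mul_apply_one_one h
  have hdiag : B * τ (-(B 1 1 * B 0 1)) ∈ H := by
    refine hH (Or.inr (Or.inr ⟨B 0 0, hB 0 0, ⟨B 1 1, hB 1 1, hdet⟩, ?_⟩))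
    rw [coe_mul_transvection_of_apply_one_zero h,
      Complex.conj_eq_of_mul_eq_one hdet (hunits _ (hB 0 0) ⟨_, hB 1 1, hdet⟩)]
  exact (H.mul_mem_cancel_right (hτ _ (neg_mem (mul_mem (hB 1 1) (hB 0 1))))).mp hdiag

theorem mem_of_forall_apply_mem (hwf : (O : Set ℂ).WellFoundedOn (fun x y => ‖x‖ < ‖y‖))
    (heucl : ∀ a ∈ O, ∀ b ∈ O, b ≠ 0 → ∃ q ∈ O, ∃ r ∈ O,
      a = q * b + r ∧ Complex.normSq r < Complex.normSq b)
    {B : SL(2, ℂ)} (hB : ∀ i j, B i j ∈ O) : B ∈ H := by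
  have hwfB : {B : SL(2, ℂ) | ∀ i j, B i j ∈ O}.WellFoundedOn
      (fun B B' => ‖B 1 0‖ < ‖B' 1 0‖) := by
    refine (Set.wellFoundedOn_image (f := fun B : SL(2, ℂ) => B 1 0)).mp (hwf.subset ?_)
    rintro _ ⟨B, hB, rfl⟩
    exact hB 1 0
  refine hwfB.induction hB fun B hB IH => ?_
  by_cases hc0 : B 1 0 = 0
  · exact mem_of_apply_one_zero_eq_zero hH hunits hτ hB hc0
  obtain ⟨q, hq, r, hr, hqr, hlt⟩ := heucl _ (hB 0 0) _ (hB 1 0) hc0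
  set W := weylElement ℂ * τ (-q) with hW_def
  have hW : W ∈ H := mul_mem (weylElement_mem hH) (hτ _ (neg_mem hq))
  have hWB : ∀ i j, (W * B) i j ∈ O :=
    mul_apply_mem (mul_apply_mem (weylElement_apply_mem O)
      (transvection_zero_one_apply_mem (neg_mem hq))) hB
  have hWB₁₀ : (W * B) 1 0 = -r := by
    rw [hW_def, weylElement_mul_transvection_mul_apply_one_zero, hqr]
    ring
  refine (H.mul_mem_cancel_left hW).mp (IH _ hWB ?_)
  rw [hWB₁₀, norm_neg, ← sq_lt_sq₀ (norm_nonneg _) (norm_nonneg _), Complex.sq_norm,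
    Complex.sq_norm]
  exact hlt

end sl2Generators

/-- Let `𝒪` be a discrete Euclidean subring of `ℂ` of the form `𝒪 = {m + nθ² : m,n ∈ ℤ}`
where `θ ∈ 𝒪` is a unit, and assume all units of `𝒪` have norm `1`.  Then `SL₂(𝒪)`
(realized as the subgroup of `SL₂(ℂ)` of matrices with all entries in `𝒪`) is generated
by the matrices `[[1,1],[0,1]]`, `[[ε,0],[0,conj ε]]` for `ε` ranging over all units of
`𝒪`, and `[[0,1],[−1,0]]`. -/
theorem SL2_order_generators (O : Subring ℂ) (θ : ℂ)
    (hθO : θ ∈ O) (hθunit : ∃ ν ∈ O, θ * ν = 1 ∧ ν * θ = 1)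
    (hform : ∀ z : ℂ, z ∈ O ↔ ∃ m n : ℤ, z = (m : ℂ) + (n : ℂ) * θ ^ 2)
    (hdisc : ∃ ε : ℝ, 0 < ε ∧ ∀ z ∈ O, z ≠ 0 → ε ≤ ‖z‖)
    (heucl : ∀ a ∈ O, ∀ b ∈ O, b ≠ 0 → ∃ q ∈ O, ∃ r ∈ O,
      a = q * b + r ∧ Complex.normSq r < Complex.normSq b)
    (hunits : ∀ u ∈ O, (∃ v ∈ O, u * v = 1) → Complex.normSq u = 1)
    (A : SpecialLinearGroup (Fin 2) ℂ)
    (hA : ∀ i j, (A : Matrix (Fin 2) (Fin 2) ℂ) i j ∈ O) :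
    A ∈ Subgroup.closure {B : SpecialLinearGroup (Fin 2) ℂ |
      (B : Matrix (Fin 2) (Fin 2) ℂ) = !![1, 1; 0, 1] ∨
      (B : Matrix (Fin 2) (Fin 2) ℂ) = !![0, 1; -1, 0] ∨
      ∃ ε : ℂ, ε ∈ O ∧ (∃ v ∈ O, ε * v = 1) ∧
        (B : Matrix (Fin 2) (Fin 2) ℂ) = !![ε, 0; 0, starRingEnd ℂ ε]} := by
  obtain ⟨ν, hνO, hθν, -⟩ := hθunit
  obtain ⟨ε, hε, hsep⟩ := hdisc
  have := O.toAddSubgroup.discreteTopology_of_le_norm hε hsep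
  have hH : sl2Generators O ⊆ Subgroup.closure (sl2Generators O) := Subgroup.subset_closure
  refine sl2Generators.mem_of_forall_apply_mem hH hunits (fun x hx => ?_)
    (Set.wellFoundedOn_norm_lt_of_finite O.toAddSubgroup.finite_setOf_norm_lt) heucl hA
  exact sl2Generators.transvection_mem hH hθO hνO hθν (hunits θ hθO ⟨ν, hνO, hθν⟩)
    (fun z hz => (hform z).mp hz) hx
end

section
/- Let θ = (1 + i√3)/2 ∈ ℂ. Then θ has multiplicative order 6 (θ⁶ = 1, θ³ = −1), and the group SL₂(ℤ[ω]) over the Eisenstein integers (ω = θ² = (−1+i√3)/2) contains the matrices S₀ = [[0,θ],[−conj(θ),1]], S₁ = [[0,−1],[1,0]], S₂ = [[0, conj(θ)],[−θ, 0]], and these three matrices generate SL₂(ℤ[ω]) up to sign. -/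
open Matrix

noncomputable section

/-- `θ = (1 + i√3)/2`. -/
def thetaA2 : ℂ := (1 + Complex.I * Real.sqrt 3) / 2

/-- The Eisenstein integers `ℤ[ω]` with `ω = (−1 + i√3)/2`. -/
def Eisenstein : Set ℂ :=
  {z | ∃ m n : ℤ, z = (m : ℂ) + (n : ℂ) * ((-1 + Complex.I * Real.sqrt 3) / 2)}

def S0mat : Matrix (Fin 2) (Fin 2) ℂ := !![0, thetaA2; -(starRingEnd ℂ thetaA2), 1]
def S1mat : Matrix (Fin 2) (Fin 2) ℂ := !![0, -1; 1, 0]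
def S2mat : Matrix (Fin 2) (Fin 2) ℂ := !![0, starRingEnd ℂ thetaA2; -thetaA2, 0]

def wE : ℂ := (-1 + Complex.I * Real.sqrt 3) / 2

lemma sqrt3_sq : ((Real.sqrt 3 : ℝ) : ℂ)^2 = 3 := by
  norm_cast; exact Real.sq_sqrt (by norm_num)

lemma theta_sq : thetaA2 ^ 2 = thetaA2 - 1 := by
  unfold thetaA2
  linear_combination (((Real.sqrt 3:ℝ):ℂ)^2/4) * Complex.I_sq - (1/4) * sqrt3_sq

lemma wE_theta : wE = thetaA2 - 1 := by unfold wE thetaA2; ring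

lemma wE_sq : wE ^ 2 = -1 - wE := by
  rw [wE_theta]; linear_combination theta_sq

lemma conj_theta : (starRingEnd ℂ) thetaA2 = 1 - thetaA2 := by
  unfold thetaA2
  rw [map_div₀, map_add, RingHom.map_mul, _root_.map_one, Complex.conj_I, Complex.conj_ofReal,
    map_ofNat]
  ring

lemma conj_wE : (starRingEnd ℂ) wE = -1 - wE := by
  rw [wE_theta, map_sub, conj_theta, _root_.map_one]; ring

lemma mem_eisen (z : ℂ) : z ∈ Eisenstein ↔ ∃ m n : ℤ, z = (m : ℂ) + n * wE := Iff.rfl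

lemma eisen_mk (m n : ℤ) : ((m : ℂ) + n * wE) ∈ Eisenstein := ⟨m, n, rfl⟩

lemma eisen_wE : wE ∈ Eisenstein := ⟨0, 1, by push_cast [wE]; ring⟩

lemma eisen_add {x y : ℂ} (hx : x ∈ Eisenstein) (hy : y ∈ Eisenstein) :
    x + y ∈ Eisenstein := by
  obtain ⟨m, n, rfl⟩ := hx; obtain ⟨m', n', rfl⟩ := hy
  exact ⟨m + m', n + n', by push_cast [wE]; ring⟩

lemma eisen_neg {x : ℂ} (hx : x ∈ Eisenstein) : -x ∈ Eisenstein := by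
  obtain ⟨m, n, rfl⟩ := hx
  exact ⟨-m, -n, by push_cast [wE]; ring⟩

lemma eisen_mul {x y : ℂ} (hx : x ∈ Eisenstein) (hy : y ∈ Eisenstein) :
    x * y ∈ Eisenstein := by
  rw [mem_eisen] at hx hy ⊢
  obtain ⟨m, n, rfl⟩ := hx; obtain ⟨m', n', rfl⟩ := hy
  refine ⟨m * m' - n * n', m * n' + n * m' - n * n', ?_⟩
  push_cast
  linear_combination ((n:ℂ) * n') * wE_sq

lemma eisen_sub {x y : ℂ} (hx : x ∈ Eisenstein) (hy : y ∈ Eisenstein) :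
    x - y ∈ Eisenstein := by
  rw [sub_eq_add_neg]; exact eisen_add hx (eisen_neg hy)

lemma normSq_eisen (m n : ℤ) :
    Complex.normSq ((m : ℂ) + n * wE) = ((m^2 - m*n + n^2 : ℤ) : ℝ) := by
  have h := Complex.mul_conj ((m : ℂ) + n * wE)
  apply Complex.ofReal_injective
  rw [← h]
  rw [map_add, RingHom.map_mul, conj_wE, map_intCast, map_intCast]
  push_cast
  linear_combination (-(n:ℂ) * n) * wE_sq

lemma eisen_normSq_int {z : ℂ} (hz : z ∈ Eisenstein) :
    ∃ t : ℤ, 0 ≤ t ∧ Complex.normSq z = (t : ℝ) := by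
  obtain ⟨m, n, rfl⟩ := hz
  refine ⟨m^2 - m*n + n^2, by nlinarith [sq_nonneg (2*m - n), sq_nonneg n], normSq_eisen m n⟩

lemma wE_re : wE.re = -1/2 := by simp [wE, Complex.div_re]
lemma wE_im : wE.im = Real.sqrt 3 / 2 := by simp [wE, Complex.div_im]

lemma exists_close (z : ℂ) :
    ∃ m n : ℤ, Complex.normSq (z - ((m : ℂ) + n * wE)) ≤ 3/4 := by
  set s := Real.sqrt 3 with hs_def
  have hs : s^2 = 3 := Real.sq_sqrt (by norm_num)
  have hs0 : (0:ℝ) < s := Real.sqrt_pos.mpr (by norm_num)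
  set u := z.re; set v := z.im
  set x := u + v / s with hx
  set y := 2 * v / s with hy
  refine ⟨round x, round y, ?_⟩
  have ha : |x - round x| ≤ 1/2 := abs_sub_round x
  have hb : |y - round y| ≤ 1/2 := abs_sub_round y
  set m : ℤ := round x; set n : ℤ := round y
  have ha2 : (x - m)^2 ≤ 1/4 := by
    obtain ⟨h1, h2⟩ := abs_le.mp ha; nlinarith
  have hb2 : (y - n)^2 ≤ 1/4 := by
    obtain ⟨h1, h2⟩ := abs_le.mp hb; nlinarith
  have hre : (z - ((m : ℂ) + n * wE)).re = u - m + n/2 := by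
    simp [Complex.sub_re, Complex.add_re, Complex.mul_re, wE_re, wE_im]
    ring
  have him : (z - ((m : ℂ) + n * wE)).im = v - n * s / 2 := by
    simp [Complex.sub_im, Complex.add_im, Complex.mul_im, wE_re, wE_im]
    ring
  rw [Complex.normSq_apply, hre, him]
  have hv : v = y * s / 2 := by rw [hy]; field_simp
  have hu : u = x - y / 2 := by rw [hx, hy]; field_simp; ring
  rw [hu, hv]
  have h2 : (y*s/2 - (n:ℝ)*s/2)*(y*s/2 - (n:ℝ)*s/2) = 3*(y-(n:ℝ))^2/4 := by
    linear_combination ((y-(n:ℝ))^2/4) * hs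
  rw [h2]
  nlinarith [sq_nonneg ((x-m) - (y-n)), sq_nonneg ((x-m) + (y-n))]

lemma det_S0 : S0mat.det = 1 := by
  rw [S0mat, Matrix.det_fin_two_of, conj_theta]
  linear_combination -theta_sq

lemma det_S1 : S1mat.det = 1 := by rw [S1mat, Matrix.det_fin_two_of]; ring

lemma det_S2 : S2mat.det = 1 := by
  rw [S2mat, Matrix.det_fin_two_of, conj_theta]
  linear_combination -theta_sq

abbrev SL2C := SpecialLinearGroup (Fin 2) ℂ

def S0el : SL2C := ⟨S0mat, det_S0⟩
def S1el : SL2C := ⟨S1mat, det_S1⟩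
def S2el : SL2C := ⟨S2mat, det_S2⟩
def negOne : SL2C := ⟨-1, by simp [Matrix.det_neg]⟩
def Tel (x : ℂ) : SL2C := ⟨!![1, x; 0, 1], by simp [Matrix.det_fin_two_of]⟩
def Del : SL2C := ⟨!![thetaA2 - 1, 0; 0, -thetaA2], by
  rw [Matrix.det_fin_two_of]; linear_combination -theta_sq⟩

def genSet : Set SL2C := {B : SL2C |
  (B : Matrix (Fin 2) (Fin 2) ℂ) = S0mat ∨ (B : Matrix (Fin 2) (Fin 2) ℂ) = S1mat ∨
  (B : Matrix (Fin 2) (Fin 2) ℂ) = S2mat ∨ (B : Matrix (Fin 2) (Fin 2) ℂ) = -1}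

def H : Subgroup SL2C := Subgroup.closure genSet

lemma hS0 : S0el ∈ H := Subgroup.subset_closure (Or.inl rfl)
lemma hS1 : S1el ∈ H := Subgroup.subset_closure (Or.inr (Or.inl rfl))
lemma hS2 : S2el ∈ H := Subgroup.subset_closure (Or.inr (Or.inr (Or.inl rfl)))
lemma hneg : negOne ∈ H := Subgroup.subset_closure (Or.inr (Or.inr (Or.inr rfl)))

lemma Del_mul_S1 : Del * S1el = S2el := by
  apply Subtype.ext
  show (Del : Matrix (Fin 2) (Fin 2) ℂ) * S1el = S2mat
  rw [show (Del : Matrix (Fin 2) (Fin 2) ℂ) = !![thetaA2 - 1, 0; 0, -thetaA2] from rfl,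
    show (S1el : Matrix (Fin 2) (Fin 2) ℂ) = S1mat from rfl, S1mat, S2mat, conj_theta]
  ext i j
  fin_cases i <;> fin_cases j <;>
    simp [Matrix.mul_apply, Fin.sum_univ_two] <;> ring

lemma hD : Del ∈ H := by
  have : Del = S2el * S1el⁻¹ := by rw [← Del_mul_S1]; group
  rw [this]; exact H.mul_mem hS2 (H.inv_mem hS1)

lemma Tel_mul (x y : ℂ) : Tel x * Tel y = Tel (x + y) := by
  apply Subtype.ext
  show (!![1,x;0,1] : Matrix (Fin 2) (Fin 2) ℂ) * !![1,y;0,1] = !![1,x+y;0,1]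
  ext i j
  fin_cases i <;> fin_cases j <;> simp [Matrix.mul_apply, Fin.sum_univ_two] <;> ring

lemma Tel_zero : Tel 0 = 1 := by
  apply Subtype.ext
  show (!![1,(0:ℂ);0,1] : Matrix (Fin 2) (Fin 2) ℂ) = 1
  ext i j
  fin_cases i <;> fin_cases j <;> simp

lemma Tel_inv (x : ℂ) : (Tel x)⁻¹ = Tel (-x) := by
  rw [inv_eq_iff_mul_eq_one, Tel_mul, show x + -x = 0 by ring, Tel_zero]

lemma S1_Del_Tel : S1el * (Del * Tel (-thetaA2)) = S0el := by
  apply Subtype.ext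
  show S1mat * ((!![thetaA2 - 1, 0; 0, -thetaA2] : Matrix (Fin 2) (Fin 2) ℂ) * !![1,-thetaA2;0,1]) = S0mat
  rw [S1mat, S0mat, conj_theta]
  ext i j
  fin_cases i <;> fin_cases j <;> simp [Matrix.mul_apply, Fin.sum_univ_two] <;>
    first
    | ring1
    | linear_combination theta_sq
    | linear_combination -theta_sq

lemma Del_Tel_comm (x : ℂ) : Del * Tel x = Tel (-thetaA2 * x) * Del := by
  apply Subtype.ext
  show (!![thetaA2 - 1, 0; 0, -thetaA2] : Matrix (Fin 2) (Fin 2) ℂ) * !![1,x;0,1]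
      = !![1,-thetaA2*x;0,1] * !![thetaA2 - 1, 0; 0, -thetaA2]
  ext i j
  fin_cases i <;> fin_cases j <;> simp [Matrix.mul_apply, Fin.sum_univ_two] <;>
    first
    | ring1
    | linear_combination x * theta_sq
    | linear_combination -x * theta_sq

lemma hT_neg_theta : Tel (-thetaA2) ∈ H := by
  have : Tel (-thetaA2) = Del⁻¹ * (S1el⁻¹ * S0el) := by
    rw [← S1_Del_Tel]; group
  rw [this]
  exact H.mul_mem (H.inv_mem hD) (H.mul_mem (H.inv_mem hS1) hS0)

lemma hT_step {x : ℂ} (hx : Tel x ∈ H) : Tel (-thetaA2 * x) ∈ H := by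
  have : Tel (-thetaA2 * x) = Del * Tel x * Del⁻¹ := by
    rw [Del_Tel_comm]; group
  rw [this]
  exact H.mul_mem (H.mul_mem hD hx) (H.inv_mem hD)

lemma theta_cube : thetaA2 ^ 3 = -1 := by
  have h := theta_sq
  calc thetaA2 ^ 3 = thetaA2 * thetaA2 ^ 2 := by ring
  _ = -1 := by rw [h]; linear_combination theta_sq

lemma hT_wE : Tel ((-1 + Complex.I * Real.sqrt 3) / 2) ∈ H := by
  have h1 : Tel (-thetaA2 * -thetaA2) ∈ H := hT_step hT_neg_theta
  have : (-thetaA2 * -thetaA2 : ℂ) = (-1 + Complex.I * Real.sqrt 3) / 2 := by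
    have : ((-1 + Complex.I * Real.sqrt 3) / 2 : ℂ) = thetaA2 - 1 := by
      unfold thetaA2; ring
    rw [this]; linear_combination theta_sq
  rwa [this] at h1

lemma hT_one : Tel 1 ∈ H := by
  have h1 : Tel (-thetaA2 * (-thetaA2 * -thetaA2)) ∈ H := hT_step (hT_step hT_neg_theta)
  have : (-thetaA2 * (-thetaA2 * -thetaA2) : ℂ) = 1 := by
    have := theta_cube; linear_combination -this
  rwa [this] at h1

lemma hT_int_mul {x : ℂ} (hx : Tel x ∈ H) : ∀ k : ℤ, Tel (k * x) ∈ H := by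
  intro k
  induction k using Int.induction_on with
  | zero => simpa [Tel_zero] using H.one_mem
  | succ k ih =>
      have : ((k:ℤ) + 1 : ℤ) * x = k * x + x := by push_cast; ring
      rw [show (((k:ℤ) + 1 : ℤ) : ℂ) * x = (k:ℂ) * x + x by push_cast; ring, ← Tel_mul]
      exact H.mul_mem ih hx
  | pred k ih =>
      rw [show ((-(k:ℤ) - 1 : ℤ) : ℂ) * x = ((-(k:ℤ) : ℤ) : ℂ) * x + -x by push_cast; ring,
        ← Tel_mul]
      exact H.mul_mem ih (by rw [← Tel_inv]; exact H.inv_mem hx)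

lemma hT_eisen {x : ℂ} (hx : x ∈ Eisenstein) : Tel x ∈ H := by
  obtain ⟨m, n, rfl⟩ := hx
  rw [← Tel_mul]
  refine H.mul_mem ?_ (hT_int_mul hT_wE n)
  simpa using hT_int_mul hT_one m

lemma theta_ne_values : thetaA2 ≠ 1 ∧ thetaA2 ≠ 0 ∧ thetaA2 ≠ 2 ∧ thetaA2 ≠ -1 := by
  refine ⟨?_, ?_, ?_, ?_⟩ <;> intro h <;> have h2 := theta_sq <;> rw [h] at h2 <;> norm_num at h2

lemma eisen_norm_one {a : ℂ} (ha : a ∈ Eisenstein) (h1 : Complex.normSq a = 1) :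
    a = 1 ∨ a = -1 ∨ a = thetaA2 - 1 ∨ a = 1 - thetaA2 ∨ a = thetaA2 ∨ a = -thetaA2 := by
  rw [mem_eisen] at ha
  obtain ⟨m, n, rfl⟩ := ha
  rw [normSq_eisen] at h1
  have hint : m^2 - m*n + n^2 = 1 := by exact_mod_cast h1
  have hth : wE = thetaA2 - 1 := wE_theta
  have hn1 : -1 ≤ n := by nlinarith [sq_nonneg (2*m - n), sq_nonneg (n+1)]
  have hn2 : n ≤ 1 := by nlinarith [sq_nonneg (2*m - n), sq_nonneg (n-1)]
  have hm1 : -1 ≤ m := by nlinarith [sq_nonneg (m - 2*n), sq_nonneg (m+1)]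
  have hm2 : m ≤ 1 := by nlinarith [sq_nonneg (m - 2*n), sq_nonneg (m-1)]
  interval_cases m <;> interval_cases n <;> push_cast <;> rw [hth] <;> first
    | omega
    | (left; ring1)
    | (right; left; ring1)
    | (right; right; left; ring1)
    | (right; right; right; left; ring1)
    | (right; right; right; right; left; ring1)
    | (right; right; right; right; right; ring1)

lemma tri_decomp {a b d : ℂ} (had : a * d = 1) (A X : SL2C)
    (hA : (A : Matrix (Fin 2) (Fin 2) ℂ) = !![a, b; 0, d])
    (hX : (X : Matrix (Fin 2) (Fin 2) ℂ) = !![a, 0; 0, d]) :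
    A = X * Tel (d * b) := by
  apply Subtype.ext
  rw [Matrix.SpecialLinearGroup.coe_mul, hA, hX,
    show ((Tel (d*b) : SL2C) : Matrix (Fin 2) (Fin 2) ℂ) = !![1, d*b; 0, 1] from rfl]
  ext i j
  fin_cases i <;> fin_cases j <;> simp [Matrix.mul_apply, Fin.sum_univ_two] <;>
    first
    | ring1
    | linear_combination b * had
    | linear_combination -b * had

lemma coe_one' : ((1 : SL2C) : Matrix (Fin 2) (Fin 2) ℂ) = !![1, 0; 0, 1] := by
  rw [Matrix.SpecialLinearGroup.coe_one, Matrix.one_fin_two]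

lemma coe_negOne : ((negOne : SL2C) : Matrix (Fin 2) (Fin 2) ℂ) = !![-1, 0; 0, -1] := by
  show (-1 : Matrix (Fin 2) (Fin 2) ℂ) = _
  ext i j
  fin_cases i <;> fin_cases j <;> simp [Matrix.one_apply]

lemma coe_negDel : ((negOne * Del : SL2C) : Matrix (Fin 2) (Fin 2) ℂ)
    = !![1 - thetaA2, 0; 0, thetaA2] := by
  rw [Matrix.SpecialLinearGroup.coe_mul, coe_negOne,
    show ((Del : SL2C) : Matrix (Fin 2) (Fin 2) ℂ) = !![thetaA2 - 1, 0; 0, -thetaA2] from rfl]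
  ext i j
  fin_cases i <;> fin_cases j <;> simp [Matrix.mul_apply, Fin.sum_univ_two] <;> ring1

lemma coe_DelSq : ((Del * Del : SL2C) : Matrix (Fin 2) (Fin 2) ℂ)
    = !![-thetaA2, 0; 0, thetaA2 - 1] := by
  rw [Matrix.SpecialLinearGroup.coe_mul,
    show ((Del : SL2C) : Matrix (Fin 2) (Fin 2) ℂ) = !![thetaA2 - 1, 0; 0, -thetaA2] from rfl]
  ext i j
  fin_cases i <;> fin_cases j <;> simp [Matrix.mul_apply, Fin.sum_univ_two] <;>
    first
    | ring1
    | linear_combination theta_sq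
    | linear_combination -theta_sq

lemma coe_negDelSq : ((negOne * (Del * Del) : SL2C) : Matrix (Fin 2) (Fin 2) ℂ)
    = !![thetaA2, 0; 0, 1 - thetaA2] := by
  rw [Matrix.SpecialLinearGroup.coe_mul, coe_negOne, coe_DelSq]
  ext i j
  fin_cases i <;> fin_cases j <;> simp [Matrix.mul_apply, Fin.sum_univ_two] <;> ring1

lemma upper_mem (A : SL2C) (hE : ∀ i j, (A : Matrix (Fin 2) (Fin 2) ℂ) i j ∈ Eisenstein)
    (hc : (A : Matrix (Fin 2) (Fin 2) ℂ) 1 0 = 0) : A ∈ H := by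
  set a := (A : Matrix (Fin 2) (Fin 2) ℂ) 0 0 with ha_def
  set b := (A : Matrix (Fin 2) (Fin 2) ℂ) 0 1 with hb_def
  set d := (A : Matrix (Fin 2) (Fin 2) ℂ) 1 1 with hd_def
  have hA : (A : Matrix (Fin 2) (Fin 2) ℂ) = !![a, b; 0, d] := by
    rw [Matrix.eta_fin_two (A : Matrix (Fin 2) (Fin 2) ℂ), hc]
  have hdet := A.property
  rw [Matrix.det_fin_two, hc] at hdet
  have had : a * d = 1 := by linear_combination hdet
  have haE : a ∈ Eisenstein := hE 0 0
  have hbE : b ∈ Eisenstein := hE 0 1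
  have hdE : d ∈ Eisenstein := hE 1 1
  -- normSq a = 1
  obtain ⟨s, hs0, hs⟩ := eisen_normSq_int haE
  obtain ⟨t, ht0, ht⟩ := eisen_normSq_int hdE
  have hst : (s : ℝ) * t = 1 := by
    rw [← hs, ← ht, ← Complex.normSq_mul, had, Complex.normSq_one]
  have hst' : s * t = 1 := by exact_mod_cast hst
  have hs1 : s = 1 := by
    rcases Int.mul_eq_one_iff_eq_one_or_neg_one.mp hst' with ⟨h1, _⟩ | ⟨h1, _⟩
    · exact h1
    · omega
  have hna : Complex.normSq a = 1 := by rw [hs, hs1]; norm_num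
  have hTb : d * b ∈ Eisenstein := eisen_mul hdE hbE
  have h1ne : thetaA2 - 1 ≠ 0 := sub_ne_zero.mpr theta_ne_values.1
  have h0ne : thetaA2 ≠ 0 := theta_ne_values.2.1
  rcases eisen_norm_one haE hna with h | h | h | h | h | h
  · have hd : d = 1 := by
      have := had; rw [h, one_mul] at this; exact this
    rw [tri_decomp had A 1 (by rw [hA, h, hd]) (by rw [coe_one', h, hd])]
    exact H.mul_mem H.one_mem (hT_eisen hTb)
  · have hd : d = -1 := by
      have := had; rw [h] at this; linear_combination -this
    rw [tri_decomp had A negOne (by rw [hA, h, hd]) (by rw [coe_negOne, h, hd])]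
    exact H.mul_mem hneg (hT_eisen hTb)
  · have hd : d = -thetaA2 := by
      have key : (thetaA2 - 1) * (-thetaA2) = 1 := by linear_combination -theta_sq
      refine mul_left_cancel₀ h1ne ?_
      rw [key, ← h]; exact had
    rw [tri_decomp had A Del (by rw [hA, h, hd]) (by rw [h, hd]; rfl)]
    exact H.mul_mem hD (hT_eisen hTb)
  · have hd : d = thetaA2 := by
      have hne : (1 : ℂ) - thetaA2 ≠ 0 := fun hh => h1ne (by linear_combination -hh)
      have key : (1 - thetaA2) * thetaA2 = 1 := by linear_combination -theta_sq
      refine mul_left_cancel₀ hne ?_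
      rw [key, ← h]; exact had
    rw [tri_decomp had A (negOne * Del) (by rw [hA, h, hd]) (by rw [coe_negDel, h, hd])]
    exact H.mul_mem (H.mul_mem hneg hD) (hT_eisen hTb)
  · have hd : d = 1 - thetaA2 := by
      have key : thetaA2 * (1 - thetaA2) = 1 := by linear_combination -theta_sq
      refine mul_left_cancel₀ h0ne ?_
      rw [key, ← h]; exact had
    rw [tri_decomp had A (negOne * (Del * Del)) (by rw [hA, h, hd])
      (by rw [coe_negDelSq, h, hd])]
    exact H.mul_mem (H.mul_mem hneg (H.mul_mem hD hD)) (hT_eisen hTb)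
  · have hd : d = thetaA2 - 1 := by
      have hne : -thetaA2 ≠ 0 := neg_ne_zero.mpr h0ne
      have key : (-thetaA2) * (thetaA2 - 1) = 1 := by linear_combination -theta_sq
      refine mul_left_cancel₀ hne ?_
      rw [key, ← h]; exact had
    rw [tri_decomp had A (Del * Del) (by rw [hA, h, hd]) (by rw [coe_DelSq, h, hd])]
    exact H.mul_mem (H.mul_mem hD hD) (hT_eisen hTb)

lemma main_ind (k : ℕ) : ∀ A : SL2C, (∀ i j, (A : Matrix (Fin 2) (Fin 2) ℂ) i j ∈ Eisenstein) →
    Complex.normSq ((A : Matrix (Fin 2) (Fin 2) ℂ) 1 0) ≤ (k : ℝ) → A ∈ H := by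
  induction k using Nat.strong_induction_on with
  | _ k ih =>
  intro A hE hk
  by_cases hc0 : (A : Matrix (Fin 2) (Fin 2) ℂ) 1 0 = 0
  · exact upper_mem A hE hc0
  · set a := (A : Matrix (Fin 2) (Fin 2) ℂ) 0 0 with ha_def
    set b := (A : Matrix (Fin 2) (Fin 2) ℂ) 0 1 with hb_def
    set c := (A : Matrix (Fin 2) (Fin 2) ℂ) 1 0 with hc_def
    set d := (A : Matrix (Fin 2) (Fin 2) ℂ) 1 1 with hd_def
    have hA : (A : Matrix (Fin 2) (Fin 2) ℂ) = !![a, b; c, d] :=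
      Matrix.eta_fin_two _
    have haE : a ∈ Eisenstein := hE 0 0
    have hbE : b ∈ Eisenstein := hE 0 1
    have hcE : c ∈ Eisenstein := hE 1 0
    have hdE : d ∈ Eisenstein := hE 1 1
    have hdet := A.property
    rw [Matrix.det_fin_two] at hdet
    obtain ⟨m, n, hq⟩ := exists_close (a / c)
    set q : ℂ := (m : ℂ) + n * wE with hq_def
    have hqE : q ∈ Eisenstein := by rw [mem_eisen]; exact ⟨m, n, rfl⟩
    have hsub : a - q * c = c * (a / c - q) := by field_simp
    have hns : Complex.normSq (a - q * c) ≤ 3 / 4 * Complex.normSq c := by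
      rw [hsub, Complex.normSq_mul]
      nlinarith [Complex.normSq_nonneg c]
    have hdetB : Matrix.det !![-c, -d; a - q * c, b - q * d] = 1 := by
      rw [Matrix.det_fin_two_of]; linear_combination hdet
    set B : SL2C := ⟨!![-c, -d; a - q * c, b - q * d], hdetB⟩ with hB_def
    have hBcoe : (B : Matrix (Fin 2) (Fin 2) ℂ) = !![-c, -d; a - q * c, b - q * d] := rfl
    have hBE : ∀ i j, (B : Matrix (Fin 2) (Fin 2) ℂ) i j ∈ Eisenstein := by
      intro i j
      fin_cases i <;> fin_cases j <;> rw [hBcoe]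
      · exact eisen_neg hcE
      · exact eisen_neg hdE
      · exact eisen_sub haE (eisen_mul hqE hcE)
      · exact eisen_sub hbE (eisen_mul hqE hdE)
    -- norm bounds
    obtain ⟨t, ht0, ht⟩ := eisen_normSq_int hcE
    have htpos : (1 : ℝ) ≤ t := by
      have h1 : 0 < Complex.normSq c := Complex.normSq_pos.mpr hc0
      rw [ht] at h1
      have : 0 < t := by exact_mod_cast h1
      exact_mod_cast this
    have hk1 : 1 ≤ k := by
      have : (1 : ℝ) ≤ (k : ℝ) := le_trans htpos (by rw [← ht]; exact hk)
      exact_mod_cast this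
    obtain ⟨u, hu0, hu⟩ := eisen_normSq_int (eisen_sub haE (eisen_mul hqE hcE))
    have huk : (u : ℝ) ≤ ((k - 1 : ℕ) : ℝ) := by
      have h1 : (u : ℝ) ≤ 3 / 4 * (t : ℝ) := by rw [← hu, ← ht]; exact hns
      have h2 : (t : ℝ) ≤ k := by rw [← ht]; exact hk
      have h3 : (u : ℝ) < (k : ℝ) := by nlinarith
      have h4 : u < (k : ℤ) := by exact_mod_cast h3
      have h5 : u ≤ (k : ℤ) - 1 := by omega
      have h6 : ((k - 1 : ℕ) : ℝ) = (k : ℝ) - 1 := by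
        push_cast [Nat.cast_sub hk1]; ring
      rw [h6]
      have : (u : ℝ) ≤ (k : ℝ) - 1 := by exact_mod_cast h5
      exact this
    have hB_mem : B ∈ H := by
      apply ih (k - 1) (Nat.sub_lt (by omega) one_pos) B hBE
      rw [hBcoe]
      show Complex.normSq (a - q * c) ≤ _
      rw [hu]; exact huk
    have hrel : S1el * Tel (-q) * A = B := by
      apply Subtype.ext
      rw [Matrix.SpecialLinearGroup.coe_mul, Matrix.SpecialLinearGroup.coe_mul, hA, hBcoe,
        show ((S1el : SL2C) : Matrix (Fin 2) (Fin 2) ℂ) = !![0,-1;1,0] from rfl,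
        show ((Tel (-q) : SL2C) : Matrix (Fin 2) (Fin 2) ℂ) = !![1,-q;0,1] from rfl]
      ext i j
      fin_cases i <;> fin_cases j <;> simp [Matrix.mul_apply, Fin.sum_univ_two] <;> ring1
    have hAeq : A = (Tel (-q))⁻¹ * (S1el⁻¹ * B) := by
      rw [← hrel]; group
    rw [hAeq]
    exact H.mul_mem (H.inv_mem (hT_eisen (eisen_neg hqE)))
      (H.mul_mem (H.inv_mem hS1) hB_mem)

lemma eisen_zero : (0 : ℂ) ∈ Eisenstein := ⟨0, 0, by norm_num⟩
lemma eisen_one : (1 : ℂ) ∈ Eisenstein := ⟨1, 0, by norm_num⟩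
lemma eisen_negone : (-1 : ℂ) ∈ Eisenstein := ⟨-1, 0, by norm_num⟩
lemma eisen_theta : thetaA2 ∈ Eisenstein := by
  rw [mem_eisen]; exact ⟨1, 1, by rw [wE_theta]; push_cast; ring⟩
lemma eisen_conj_theta : (starRingEnd ℂ) thetaA2 ∈ Eisenstein := by
  rw [conj_theta, mem_eisen]
  exact ⟨0, -1, by rw [wE_theta]; push_cast; ring⟩

/-- `θ = (1+i√3)/2` has multiplicative order `6` (`θ⁶ = 1`, `θ³ = −1`), the matrices
`S₀ = [[0,θ],[−conj θ,1]]`, `S₁ = [[0,−1],[1,0]]`, `S₂ = [[0,conj θ],[−θ,0]]` lie in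
`SL₂(ℤ[ω])` (entries Eisenstein integers, determinant `1`), and together with `−I`
they generate all of `SL₂(ℤ[ω])`. -/
theorem theta_order_six_and_generation :
    (thetaA2 ^ 6 = 1 ∧ thetaA2 ^ 3 = -1 ∧ ∀ k : ℕ, 0 < k → k < 6 → thetaA2 ^ k ≠ 1) ∧
    ((∀ i j, S0mat i j ∈ Eisenstein) ∧ (∀ i j, S1mat i j ∈ Eisenstein) ∧
      (∀ i j, S2mat i j ∈ Eisenstein) ∧
      S0mat.det = 1 ∧ S1mat.det = 1 ∧ S2mat.det = 1) ∧
    (∀ A : SpecialLinearGroup (Fin 2) ℂ,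
      (∀ i j, (A : Matrix (Fin 2) (Fin 2) ℂ) i j ∈ Eisenstein) →
      A ∈ Subgroup.closure {B : SpecialLinearGroup (Fin 2) ℂ |
        (B : Matrix (Fin 2) (Fin 2) ℂ) = S0mat ∨
        (B : Matrix (Fin 2) (Fin 2) ℂ) = S1mat ∨
        (B : Matrix (Fin 2) (Fin 2) ℂ) = S2mat ∨
        (B : Matrix (Fin 2) (Fin 2) ℂ) = -1}) := by
  refine ⟨⟨?_, theta_cube, ?_⟩, ⟨?_, ?_, ?_, det_S0, det_S1, det_S2⟩, ?_⟩
  · linear_combination (thetaA2 ^ 3 - 1) * theta_cube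
  · intro k hk1 hk6
    interval_cases k
    · intro h; exact theta_ne_values.1 (by simpa using h)
    · intro h
      exact theta_ne_values.2.2.1 (by linear_combination h - theta_sq)
    · intro h
      have := theta_cube.symm.trans h
      norm_num at this
    · intro h
      have h4 : thetaA2 ^ 4 = -thetaA2 := by
        linear_combination (thetaA2 ^ 2 + thetaA2) * theta_sq
      exact theta_ne_values.2.2.2 (by linear_combination h4 - h)
    · intro h
      have h5 : thetaA2 ^ 5 = 1 - thetaA2 := by
        linear_combination (thetaA2 ^ 3 + thetaA2 ^ 2 - 1) * theta_sq
      exact theta_ne_values.2.1 (by linear_combination h5 - h)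
  · intro i j
    fin_cases i <;> fin_cases j <;> simp only [S0mat, Matrix.cons_val', Matrix.cons_val_zero,
      Matrix.empty_val', Matrix.cons_val_fin_one, Matrix.cons_val_one, Matrix.head_cons,
      Matrix.head_fin_const]
    · exact eisen_zero
    · exact eisen_theta
    · exact eisen_neg eisen_conj_theta
    · exact eisen_one
  · intro i j
    fin_cases i <;> fin_cases j <;> simp only [S1mat, Matrix.cons_val', Matrix.cons_val_zero,
      Matrix.empty_val', Matrix.cons_val_fin_one, Matrix.cons_val_one, Matrix.head_cons,
      Matrix.head_fin_const]
    · exact eisen_zero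
    · exact eisen_negone
    · exact eisen_one
    · exact eisen_zero
  · intro i j
    fin_cases i <;> fin_cases j <;> simp only [S2mat, Matrix.cons_val', Matrix.cons_val_zero,
      Matrix.empty_val', Matrix.cons_val_fin_one, Matrix.cons_val_one, Matrix.head_cons,
      Matrix.head_fin_const]
    · exact eisen_zero
    · exact eisen_conj_theta
    · exact eisen_neg eisen_theta
    · exact eisen_zero
  · intro A hA
    show A ∈ H
    obtain ⟨t, ht0, ht⟩ := eisen_normSq_int (hA 1 0)
    apply main_ind t.toNat A hA
    rw [ht]
    exact_mod_cast Int.self_le_toNat t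
end
end

section
/- For 2×2 matrices S₁, S₂ with quaternion entries, det((S₁S₂)(S₂†S₁†)) = det(S₁S₁†)·det(S₂S₂†), where S† is the conjugate transpose and det of a Hermitian quaternionic 2×2 matrix [[a, b],[conj(b), d]] (a,d real) is defined as ad − b·conj(b). -/
/-!
Under the complex representation `ℍ → M₂(ℂ)`, a `2×2` quaternionic matrix `S` becomes a `4×4`
complex matrix `Φ S`. For Hermitian `T` the value `hdet T` is real and a direct computation gives
`det (Φ T) = (hdet T)²`; applied to `T = S S†` this yields `(hdet (S S†))² = |det (Φ S)|²`.
Since `hdet (S S†) ≥ 0`, it equals the multiplicative quantity `|det (Φ S)|`.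
-/

open Matrix

noncomputable section

/-- The determinant of a Hermitian quaternionic `2×2` matrix `[[a,b],[conj b,d]]`
(`a`, `d` real): `det = a·d − b·conj b`. -/
def hdet (X : Matrix (Fin 2) (Fin 2) (Quaternion ℝ)) : Quaternion ℝ :=
  X 0 0 * X 1 1 - X 0 1 * star (X 0 1)

open Quaternion

-- `z + w j ↦ [[z, w], [-w̄, z̄]]`
def complexRep : ℍ[ℝ] →+* Matrix (Fin 2) (Fin 2) ℂ where
  toFun q := !![⟨q.re, q.imI⟩, ⟨q.imJ, q.imK⟩; ⟨-q.imJ, q.imK⟩, ⟨q.re, -q.imI⟩]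
  map_one' := by ext i j; fin_cases i <;> fin_cases j <;> simp [Complex.ext_iff]
  map_mul' x y := by
    ext i j; fin_cases i <;> fin_cases j <;> apply Complex.ext <;>
      simp [Matrix.mul_apply] <;> ring
  map_zero' := by ext i j; fin_cases i <;> fin_cases j <;> simp [Complex.ext_iff]
  map_add' x y := by
    ext i j; fin_cases i <;> fin_cases j <;> simp [Complex.ext_iff] <;> ring

theorem complexRep_star (q : ℍ[ℝ]) : complexRep (star q) = (complexRep q)ᴴ := by
  ext i j; fin_cases i <;> fin_cases j <;> simp [complexRep, Complex.ext_iff]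

section ComplexRepMatrix

variable {n : Type*} [Fintype n] [DecidableEq n]

def complexRepMatrix : Matrix n n ℍ[ℝ] →+* Matrix (n × Fin 2) (n × Fin 2) ℂ :=
  (compRingEquiv n (Fin 2) ℂ).toRingHom.comp complexRep.mapMatrix

theorem complexRepMatrix_apply (S : Matrix n n ℍ[ℝ]) (p q : n × Fin 2) :
    complexRepMatrix S p q = complexRep (S p.1 q.1) p.2 q.2 :=
  rfl

theorem complexRepMatrix_conjTranspose (S : Matrix n n ℍ[ℝ]) :
    complexRepMatrix Sᴴ = (complexRepMatrix S)ᴴ := by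
  ext p q
  simp [complexRepMatrix_apply, conjTranspose_apply, complexRep_star]

end ComplexRepMatrix

theorem Matrix.IsHermitian.apply_diag_eq_coe_re {n : Type*} {T : Matrix n n ℍ[ℝ]}
    (h : T.IsHermitian) (i : n) : T i i = ((T i i).re : ℍ[ℝ]) :=
  star_eq_self.mp (h.apply i i)

theorem Matrix.IsHermitian.eq_fin_two {T : Matrix (Fin 2) (Fin 2) ℍ[ℝ]} (h : T.IsHermitian) :
    T = !![((T 0 0).re : ℍ[ℝ]), T 0 1; star (T 0 1), ((T 1 1).re : ℍ[ℝ])] := by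
  refine Matrix.ext fun i j => ?_
  fin_cases i <;> fin_cases j
  · exact h.apply_diag_eq_coe_re 0
  · rfl
  · exact (h.apply 1 0).symm
  · exact h.apply_diag_eq_coe_re 1

def hdetRe (T : Matrix (Fin 2) (Fin 2) ℍ[ℝ]) : ℝ :=
  (T 0 0).re * (T 1 1).re - normSq (T 0 1)

theorem hdet_eq_coe_hdetRe {T : Matrix (Fin 2) (Fin 2) ℍ[ℝ]} (h : T.IsHermitian) :
    hdet T = hdetRe T := by
  rw [hdet, hdetRe, h.apply_diag_eq_coe_re 0, h.apply_diag_eq_coe_re 1, self_mul_star,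
    re_coe, re_coe, coe_sub, coe_mul]

theorem det_complexRepMatrix_fin_two (a d : ℝ) (b : ℍ[ℝ]) :
    (complexRepMatrix !![(a : ℍ[ℝ]), b; star b, (d : ℍ[ℝ])]).det =
      ((a * d - normSq b : ℝ) : ℂ) ^ 2 := by
  rw [← det_reindex_self finProdFinEquiv, ← Complex.ofReal_pow]
  apply Complex.ext <;> simp only [Complex.ofReal_re, Complex.ofReal_im] <;>
    simp [det_succ_row_zero, Fin.sum_univ_succ, Fin.succAbove, Fin.castSucc, Fin.castAdd,
      Fin.castLE, finProdFinEquiv, Fin.divNat, Fin.modNat, complexRepMatrix_apply, complexRep,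
      Complex.mul_re, Complex.mul_im, normSq_def', pow_succ] <;>
    ring

theorem det_complexRepMatrix_of_isHermitian {T : Matrix (Fin 2) (Fin 2) ℍ[ℝ]}
    (h : T.IsHermitian) : (complexRepMatrix T).det = (hdetRe T : ℂ) ^ 2 := by
  conv_lhs => rw [h.eq_fin_two]
  exact det_complexRepMatrix_fin_two _ _ _

theorem hdetRe_mul_conjTranspose_self_nonneg (S : Matrix (Fin 2) (Fin 2) ℍ[ℝ]) :
    0 ≤ hdetRe (S * Sᴴ) := by
  have hdiag (i : Fin 2) : ((S * Sᴴ) i i).re = normSq (S i 0) + normSq (S i 1) := by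
    simp [mul_apply, Fin.sum_univ_two, self_mul_star]
  have hoff : ‖(S * Sᴴ) 0 1‖ ≤ ‖S 0 0‖ * ‖S 1 0‖ + ‖S 0 1‖ * ‖S 1 1‖ := by
    simpa [mul_apply, Fin.sum_univ_two, norm_mul, _root_.norm_star] using
      norm_add_le (S 0 0 * star (S 1 0)) (S 0 1 * star (S 1 1))
  simp only [hdetRe, hdiag, normSq_eq_norm_mul_self]
  -- Lagrange's identity: `(a² + b²)(c² + d²) - (ac + bd)² = (ad - bc)²`
  nlinarith [norm_nonneg ((S * Sᴴ) 0 1), mul_self_le_mul_self (norm_nonneg _) hoff,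
    sq_nonneg (‖S 0 0‖ * ‖S 1 1‖ - ‖S 0 1‖ * ‖S 1 0‖)]

theorem hdet_mul_conjTranspose_self (S : Matrix (Fin 2) (Fin 2) ℍ[ℝ]) :
    hdet (S * Sᴴ) = ‖(complexRepMatrix S).det‖ := by
  have hherm := isHermitian_mul_conjTranspose_self S
  have hsq : (hdetRe (S * Sᴴ) : ℂ) ^ 2 = (‖(complexRepMatrix S).det‖ : ℂ) ^ 2 := by
    rw [← det_complexRepMatrix_of_isHermitian hherm, map_mul, det_mul,
      complexRepMatrix_conjTranspose, det_conjTranspose, ← Complex.mul_conj']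
    rfl
  rw [hdet_eq_coe_hdetRe hherm]
  congr 1
  exact (pow_left_inj₀ (hdetRe_mul_conjTranspose_self_nonneg S) (norm_nonneg _) two_ne_zero).mp
    (mod_cast hsq)

/-- For `2×2` quaternionic matrices `S₁, S₂`:
`det((S₁S₂)(S₂†S₁†)) = det(S₁S₁†)·det(S₂S₂†)`. -/
theorem hdet_mul (S₁ S₂ : Matrix (Fin 2) (Fin 2) (Quaternion ℝ)) :
    hdet ((S₁ * S₂) * (S₂ᴴ * S₁ᴴ)) = hdet (S₁ * S₁ᴴ) * hdet (S₂ * S₂ᴴ) := by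
  rw [← conjTranspose_mul, hdet_mul_conjTranspose_self, hdet_mul_conjTranspose_self,
    hdet_mul_conjTranspose_self, map_mul, det_mul, norm_mul, coe_mul]
end
end
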